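/- Let Γ be a finite multigraph and S a subset of its half-edges with complement T; let s(v) be the number of half-edges of S at the vertex v and let X = |∂S| be the area of the pair (Γ, s). For every N ≥ 1 there exist permutation matrices U_v at the vertices such that the marginal ρ_S = Tr_T |Ψ⟩⟨Ψ| of the graph state equals N^{−X}·P for some orthogonal projection P of rank N^X; consequently, for this choice of unitaries, H(ρ_S) = X·ln N and more generally every Rényi entropy H_q(ρ_S) = (1/(1−q))·ln Tr(ρ_S^q) equals X·ln N. -/

import Mathlib

/-- A finite multigraph: finite vertex and edge types, each edge has an
ordered pair of (possibly equal) endpoints. -/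
structure Multigraph where
  V : Type
  E : Type
  [fintV : Fintype V]
  [fintE : Fintype E]
  [decV : DecidableEq V]
  [decE : DecidableEq E]
  ends : E → V × V

attribute [instance] Multigraph.fintV Multigraph.fintE Multigraph.decV Multigraph.decE

namespace Multigraph

variable (G : Multigraph)

/-- A half-edge of `G`: each edge `e` contributes the two half-edges
`(e, false)` (at the first endpoint) and `(e, true)` (at the second endpoint). -/
abbrev Half := G.E × Bool

/-- The vertex at which a half-edge sits. -/
def vertexOf (h : G.Half) : G.V := if h.2 then (G.ends h.1).2 else (G.ends h.1).1

/-- The degree of a vertex: the number of half-edges at it (loops count twice). -/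
def deg (v : G.V) : ℕ := (Finset.univ.filter fun h : G.Half => G.vertexOf h = v).card

/-- A marking `M` (a set of half-edges) is compatible with the counting function `s`
if it contains exactly `s v` half-edges at each vertex `v`. -/
def Compatible (s : G.V → ℕ) (M : Finset G.Half) : Prop :=
  ∀ v : G.V, (M.filter fun h : G.Half => G.vertexOf h = v).card = s v

/-- The number of crossings of a marking `M`: the number of edges having exactly one
of their two half-edges in `M`. -/
def cr (M : Finset G.Half) : ℕ :=
  (Finset.univ.filter fun e : G.E =>
    ((e, false) ∈ M ∧ (e, true) ∉ M) ∨ ((e, false) ∉ M ∧ (e, true) ∈ M)).card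

/-- The area `|∂S|` of the pair `(G, s)`: the maximum number of crossings over
all markings compatible with `s`. -/
noncomputable def area (s : G.V → ℕ) : ℕ :=
  sSup {k : ℕ | ∃ M : Finset G.Half, G.Compatible s M ∧ G.cr M = k}

/-- Nodes of the network `N_{Γ,s}`: the vertices of `G` together with a
source (`Sum.inr true`) and a sink (`Sum.inr false`). -/
abbrev Node := G.V ⊕ Bool

/-- The source of the network. -/
def source : G.Node := Sum.inr true

/-- The sink of the network. -/
def sink : G.Node := Sum.inr false

/-- The number of edges of `G` joining `v` and `w`. -/
def edgesBetween (v w : G.V) : ℕ :=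
  (Finset.univ.filter fun e : G.E => G.ends e = (v, w) ∨ G.ends e = (w, v)).card

/-- The capacities of the network `N_{Γ,s}`: `t v = deg v - s v` from the source to `v`,
`s v` from `v` to the sink, the number of edges between `v` and `w` for distinct
vertices `v, w`, and `0` otherwise. -/
def cap (s : G.V → ℕ) : G.Node → G.Node → ℕ
  | Sum.inr true, Sum.inl v => G.deg v - s v
  | Sum.inl v, Sum.inr false => s v
  | Sum.inl v, Sum.inl w => if v = w then 0 else G.edgesBetween v w
  | _, _ => 0

/-- A flow in the network `N_{Γ,s}`: dominated by the capacities, and the inflow equals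
the outflow at every node of `V`. -/
def IsFlow (s : G.V → ℕ) (f : G.Node → G.Node → ℕ) : Prop :=
  (∀ x y : G.Node, f x y ≤ G.cap s x y) ∧
    ∀ v : G.V, (∑ x : G.Node, f x (Sum.inl v)) = ∑ x : G.Node, f (Sum.inl v) x

/-- The value of a flow: the total flow out of the source. -/
def flowValue (f : G.Node → G.Node → ℕ) : ℕ := ∑ x : G.Node, f G.source x

/-- The maximal flow value `X_{Γ,s}` of the network `N_{Γ,s}`. -/
noncomputable def maxFlow (s : G.V → ℕ) : ℕ :=
  sSup {k : ℕ | ∃ f : G.Node → G.Node → ℕ, G.IsFlow s f ∧ G.flowValue f = k}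


end Multigraph

open MeasureTheory

/-- Borel-type measurable space on matrices (entrywise product σ-algebra). -/
instance matrixMeasurableSpace {m n α : Type*} [MeasurableSpace α] :
    MeasurableSpace (Matrix m n α) :=
  inferInstanceAs (MeasurableSpace (m → n → α))

/-- The von Neumann entropy `H(ρ) = -∑ λᵢ ln λᵢ` of a (Hermitian) matrix, the sum
running over the eigenvalues, with the conventions `0 ln 0 = 0` (via `Real.log 0 = 0`)
and junk value `0` for non-Hermitian matrices. -/
noncomputable def vnEntropy {ι : Type*} [Fintype ι] [DecidableEq ι]
    (ρ : Matrix ι ι ℂ) : ℝ :=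
  if h : ρ.IsHermitian then -∑ i, h.eigenvalues i * Real.log (h.eigenvalues i) else 0

/-- The Rényi entropy `H_q(ρ) = (1-q)⁻¹ ln Tr(ρ^q)` of a (Hermitian) matrix, where
`Tr(ρ^q) = ∑_{λᵢ ≠ 0} λᵢ^q` is computed by functional calculus on the nonzero
eigenvalues (so that `q = 0` recovers the rank); junk value `0` for non-Hermitian
matrices. -/
noncomputable def renyiEntropy {ι : Type*} [Fintype ι] [DecidableEq ι]
    (q : ℝ) (ρ : Matrix ι ι ℂ) : ℝ :=
  if h : ρ.IsHermitian then
    (1 - q)⁻¹ * Real.log (∑ i, if h.eigenvalues i = 0 then 0 else h.eigenvalues i ^ q)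
  else 0

namespace Multigraph

variable (G : Multigraph)

/-- The index set of the total Hilbert space of the graph state: each half-edge of
the edge `e` carries the space `ℂ^{n e}`. -/
abbrev HIdx (n : G.E → ℕ) := (h : G.Half) → Fin (n h.1)

/-- The index set of the Hilbert space attached to the vertex `v`: the tensor product
of the factors of the half-edges at `v`. -/
abbrev VIdx (n : G.E → ℕ) (v : G.V) :=
  (h : {h : G.Half // G.vertexOf h = v}) → Fin (n h.1.1)

/-- The graph state vector `|Ψ⟩ = (⊗_v U_v)(⊗_e |Φ⁺_e⟩)`, where
`|Φ⁺_e⟩ = (n e)^{-1/2} ∑ᵢ |i⟩⊗|i⟩` is the maximally entangled state on the two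
half-edges of `e`, and `U_v` is a matrix acting on the factors at the vertex `v`. -/
noncomputable def gvec (n : G.E → ℕ) (U : ∀ v : G.V, Matrix (G.VIdx n v) (G.VIdx n v) ℂ) :
    G.HIdx n → ℂ :=
  fun x => ∑ y : G.HIdx n,
    (∏ v : G.V, U v (fun h => x h.1) (fun h => y h.1)) *
      ∏ e : G.E, (if y (e, false) = y (e, true) then ((Real.sqrt (n e) : ℝ) : ℂ)⁻¹ else 0)

/-- Glue an assignment on the half-edges in `S` and one on the half-edges outside `S`
to an assignment on all half-edges. -/
def glue (n : G.E → ℕ) (S : Finset G.Half)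
    (a : (h : {h : G.Half // h ∈ S}) → Fin (n h.1.1))
    (b : (h : {h : G.Half // h ∉ S}) → Fin (n h.1.1)) : G.HIdx n :=
  fun h => if hh : h ∈ S then a ⟨h, hh⟩ else b ⟨h, hh⟩

/-- The marginal `ρ_S = Tr_T |Ψ⟩⟨Ψ|` of the graph state, obtained by the partial
trace over the half-edges outside `S`. -/
noncomputable def gmarg (n : G.E → ℕ) (S : Finset G.Half)
    (U : ∀ v : G.V, Matrix (G.VIdx n v) (G.VIdx n v) ℂ) :
    Matrix ((h : {h : G.Half // h ∈ S}) → Fin (n h.1.1))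
      ((h : {h : G.Half // h ∈ S}) → Fin (n h.1.1)) ℂ :=
  Matrix.of fun a a' =>
    ∑ b : (h : {h : G.Half // h ∉ S}) → Fin (n h.1.1),
      G.gvec n U (G.glue n S a b) * star (G.gvec n U (G.glue n S a' b))

/-- The counting function of a set `S` of half-edges: `s v` is the number of
half-edges of `S` at the vertex `v`. -/
def countOf (S : Finset G.Half) : G.V → ℕ :=
  fun v => (S.filter fun h : G.Half => G.vertexOf h = v).card

end Multigraph

/-!
Choose a marking `M` compatible with `s` that attains the area, and a vertex-preserving
permutation `p` of the half-edges carrying `M` onto `S` (it exists because `M` and `S` have the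
same number of half-edges at every vertex). The permutation matrices induced by `p` at the
vertices turn the graph state into the edge state `⨂_e |Φ⁺_e⟩` relabelled by `p`, so up to
reindexing `ρ_S` is the marginal of the edge state on `M`. That marginal is a tensor product over
the edges: an edge with both or neither half in `M` contributes a pure state, an edge with exactly
one half in `M` contributes `I/N`. Hence `ρ_S` is Hermitian of trace one with
`ρ_S² = N^{-cr M} ρ_S`, so its nonzero eigenvalues all equal `N^{-X}`, and there are `N^X` of them.
-/

def Matrix.piKronecker {ι R : Type*} [Fintype ι] [CommMonoid R] {m n : ι → Type*}
    (A : ∀ i, Matrix (m i) (n i) R) : Matrix (∀ i, m i) (∀ i, n i) R :=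
  Matrix.of fun a b => ∏ i, A i (a i) (b i)

namespace Matrix

variable {ι R : Type*} [Fintype ι] [CommSemiring R] {l m n : ι → Type*}

theorem piKronecker_mul [DecidableEq ι] [∀ i, Fintype (m i)] (A : ∀ i, Matrix (l i) (m i) R)
    (B : ∀ i, Matrix (m i) (n i) R) :
    piKronecker A * piKronecker B = piKronecker fun i => A i * B i := by
  ext a b
  simp only [piKronecker, mul_apply, of_apply, ← Finset.prod_mul_distrib]
  exact (Fintype.prod_sum fun i k => A i (a i) k * B i k (b i)).symm

theorem trace_piKronecker [DecidableEq ι] [∀ i, Fintype (m i)] (A : ∀ i, Matrix (m i) (m i) R) :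
    (piKronecker A).trace = ∏ i, (A i).trace :=
  (Fintype.prod_sum fun i k => A i k k).symm

theorem piKronecker_smul (c : ι → R) (A : ∀ i, Matrix (m i) (n i) R) :
    piKronecker (fun i => c i • A i) = (∏ i, c i) • piKronecker A := by
  ext a b
  simp [piKronecker, Finset.prod_mul_distrib]

theorem mul_self_eq_trace_smul_of_subsingleton {κ : Type*} [Fintype κ] [Subsingleton κ]
    (A : Matrix κ κ R) : A * A = A.trace • A := by
  ext i j
  obtain rfl := Subsingleton.elim i j
  simp [mul_apply, trace, Fintype.sum_subsingleton _ i]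

theorem trace_submatrix_equiv {κ κ' : Type*} [Fintype κ] [Fintype κ'] (A : Matrix κ κ R)
    (e : κ' ≃ κ) : (A.submatrix e e).trace = A.trace :=
  e.sum_comp fun i => A i i

end Matrix

section ReducedDensity

variable {α K : Type*} [Fintype α] [DecidableEq α] [Fintype K]

/-- The reduced density matrix `Tr_{¬p} |ψ⟩⟨ψ|` of a vector `ψ` in `⨂_{i : α} ℂ^K` on the
factors satisfying `p`. -/
def reducedDensity (p : α → Prop) [DecidablePred p] (ψ : (α → K) → ℂ) :
    Matrix ({i // p i} → K) ({i // p i} → K) ℂ :=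
  Matrix.of fun a a' => ∑ b : {i // ¬ p i} → K,
    ψ ((Equiv.piEquivPiSubtypeProd p fun _ => K).symm (a, b)) *
      star (ψ ((Equiv.piEquivPiSubtypeProd p fun _ => K).symm (a', b)))

variable (p : α → Prop) [DecidablePred p] (ψ : (α → K) → ℂ)

theorem isHermitian_reducedDensity : (reducedDensity p ψ).IsHermitian := by
  ext a a'
  simp [reducedDensity, mul_comm]

theorem trace_reducedDensity : (reducedDensity p ψ).trace = ∑ x, ψ x * star (ψ x) := by
  rw [← (Equiv.piEquivPiSubtypeProd p fun _ => K).symm.sum_comp, Fintype.sum_prod_type]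
  rfl

theorem reducedDensity_mul_self_of_forall (hp : ∀ i, p i) :
    reducedDensity p ψ * reducedDensity p ψ = (reducedDensity p ψ).trace • reducedDensity p ψ := by
  have : IsEmpty {i // ¬ p i} := ⟨fun i => i.2 (hp i)⟩
  ext a a''
  simp only [reducedDensity, Matrix.mul_apply, Matrix.trace, Matrix.diag, Matrix.of_apply,
    Matrix.smul_apply, smul_eq_mul, Fintype.sum_unique, Finset.sum_mul]
  exact Finset.sum_congr rfl fun _ _ => by ring

theorem reducedDensity_mul_self_of_forall_not (hp : ∀ i, ¬ p i) :
    reducedDensity p ψ * reducedDensity p ψ = (reducedDensity p ψ).trace • reducedDensity p ψ :=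
  have : IsEmpty {i // p i} := ⟨fun i => hp i i.2⟩
  Matrix.mul_self_eq_trace_smul_of_subsingleton _

theorem reducedDensity_comp_equiv {β : Type*} [Fintype β] [DecidableEq β] (σ : α ≃ β)
    {q : β → Prop} [DecidablePred q] (hpq : ∀ i, p i ↔ q (σ i)) (ψ : (β → K) → ℂ) :
    reducedDensity p (fun x => ψ (x ∘ σ.symm)) =
      (reducedDensity q ψ).submatrix ((σ.subtypeEquiv hpq).arrowCongr (Equiv.refl K))
        ((σ.subtypeEquiv hpq).arrowCongr (Equiv.refl K)) := by
  have hnpq : ∀ i, ¬ p i ↔ ¬ q (σ i) := fun i => (hpq i).not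
  ext a a'
  simp only [reducedDensity, Matrix.submatrix_apply, Matrix.of_apply]
  refine Fintype.sum_equiv ((σ.subtypeEquiv hnpq).arrowCongr (Equiv.refl K)) _ _ fun b => ?_
  congr 3 <;> ext j <;> by_cases hj : q j <;> simp [hj, hpq]

end ReducedDensity

section ProductState

variable {E B K : Type*} [Fintype E] [DecidableEq E] [Fintype B] [DecidableEq B] [Fintype K]

def Equiv.piSubtypeProdCurry (p : E × B → Prop) :
    ({i // p i} → K) ≃ ((e : E) → {b // p (e, b)} → K) where
  toFun a e b := a ⟨(e, b.1), b.2⟩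
  invFun a i := a i.1.1 ⟨i.1.2, i.2⟩
  left_inv _ := rfl
  right_inv _ := rfl

theorem reducedDensity_prod (p : E × B → Prop) [DecidablePred p] (φ : E → (B → K) → ℂ) :
    reducedDensity p (fun x => ∏ e, φ e fun b => x (e, b)) =
      (Matrix.piKronecker fun e => reducedDensity (fun b => p (e, b)) (φ e)).submatrix
        (Equiv.piSubtypeProdCurry p) (Equiv.piSubtypeProdCurry p) := by
  ext a a'
  simp only [reducedDensity, Matrix.piKronecker, Matrix.submatrix_apply, Matrix.of_apply,
    star_prod, ← Finset.prod_mul_distrib]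
  rw [Fintype.prod_sum, ← (Equiv.piSubtypeProdCurry fun i => ¬ p i).symm.sum_comp]
  rfl

end ProductState

section BellState

variable (N : ℕ)

/-- The edge state `|Φ⁺⟩ = N^{-1/2} ∑ᵢ |i⟩ ⊗ |i⟩`. -/
noncomputable def bellState (w : Bool → Fin N) : ℂ :=
  if w false = w true then ((Real.sqrt N : ℝ) : ℂ)⁻¹ else 0

variable {N}

theorem ofReal_sqrt_inv_mul_star (N : ℕ) :
    ((Real.sqrt N : ℝ) : ℂ)⁻¹ * star ((Real.sqrt N : ℝ) : ℂ)⁻¹ = (N : ℂ)⁻¹ := by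
  rw [star_inv₀, Complex.star_def, Complex.conj_ofReal, ← mul_inv, ← Complex.ofReal_mul,
    Real.mul_self_sqrt (Nat.cast_nonneg N), Complex.ofReal_natCast]

theorem bellState_mul_star (w : Bool → Fin N) :
    bellState N w * star (bellState N w) = if w false = w true then (N : ℂ)⁻¹ else 0 := by
  unfold bellState
  split_ifs
  · exact ofReal_sqrt_inv_mul_star N
  · simp

theorem sum_bellState_mul_star (hN : N ≠ 0) :
    ∑ w, bellState N w * star (bellState N w) = 1 := by
  simp only [bellState_mul_star]
  rw [← (Equiv.boolArrowEquivProd (Fin N)).symm.sum_comp, Fintype.sum_prod_type]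
  simp [hN]

theorem bellState_eq_ite {b₀ : Bool} (w : Bool → Fin N) :
    bellState N w = if w b₀ = w (!b₀) then ((Real.sqrt N : ℝ) : ℂ)⁻¹ else 0 := by
  cases b₀ <;> simp [bellState, eq_comm]

theorem reducedDensity_bellState_eq_inv_smul_one {p : Bool → Prop} [DecidablePred p] {b₀ : Bool}
    (h₀ : p b₀) (h₁ : ¬ p (!b₀)) : reducedDensity p (bellState N) = (N : ℂ)⁻¹ • 1 := by
  have hp : ∀ b, p b ↔ b = b₀ := fun b => by cases b <;> cases b₀ <;> simp_all
  let : Unique {b // ¬ p b} := ⟨⟨⟨!b₀, h₁⟩⟩, fun ⟨b, hb⟩ =>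
    Subtype.ext (by rw [hp] at hb; cases b <;> cases b₀ <;> simp_all)⟩
  have : Subsingleton {b // p b} :=
    ⟨fun x y => Subtype.ext ((hp _).1 x.2 ▸ ((hp _).1 y.2).symm)⟩
  ext a a'
  have haa' : a = a' ↔ a ⟨b₀, h₀⟩ = a' ⟨b₀, h₀⟩ :=
    ⟨fun h => h ▸ rfl, fun h => funext fun b => Subsingleton.elim b ⟨b₀, h₀⟩ ▸ h⟩
  rw [reducedDensity, Matrix.of_apply, Fintype.sum_equiv (Equiv.funUnique _ (Fin N)) _
    (fun v => (if a ⟨b₀, h₀⟩ = v then ((Real.sqrt N : ℝ) : ℂ)⁻¹ else 0) *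
      star (if a' ⟨b₀, h₀⟩ = v then ((Real.sqrt N : ℝ) : ℂ)⁻¹ else 0))
    fun b => by simp [bellState_eq_ite (b₀ := b₀), h₀, h₁]; rfl]
  simp only [apply_ite star, star_zero, ite_mul, zero_mul, mul_ite, mul_zero,
    ofReal_sqrt_inv_mul_star, Finset.sum_ite_eq, Finset.mem_univ, if_true, Matrix.smul_apply,
    Matrix.one_apply, haa']
  split_ifs <;> simp_all

theorem trace_reducedDensity_bellState (hN : N ≠ 0) (p : Bool → Prop) [DecidablePred p] :
    (reducedDensity p (bellState N)).trace = 1 :=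
  (trace_reducedDensity p _).trans (sum_bellState_mul_star hN)

theorem reducedDensity_bellState_mul_self (hN : N ≠ 0) (p : Bool → Prop) [DecidablePred p] :
    reducedDensity p (bellState N) * reducedDensity p (bellState N) =
      (if p false ↔ p true then 1 else (N : ℂ)⁻¹) • reducedDensity p (bellState N) := by
  by_cases hp : p false ↔ p true
  · rw [if_pos hp, ← trace_reducedDensity_bellState hN p]
    by_cases hf : p false
    · exact reducedDensity_mul_self_of_forall p _ (Bool.forall_bool.2 ⟨hf, hp.1 hf⟩)
    · exact reducedDensity_mul_self_of_forall_not p _ (Bool.forall_bool.2 ⟨hf, mt hp.2 hf⟩)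
  · obtain ⟨b₀, h₀, h₁⟩ : ∃ b₀, p b₀ ∧ ¬ p (!b₀) := by
      by_cases hf : p false
      · exact ⟨false, hf, fun ht => hp ⟨fun _ => ht, fun _ => hf⟩⟩
      · exact ⟨true, by tauto, hf⟩
    rw [if_neg hp, reducedDensity_bellState_eq_inv_smul_one h₀ h₁, smul_mul_smul, Matrix.one_mul,
      smul_smul]

end BellState

namespace Matrix.IsHermitian

variable {ι : Type*} [Fintype ι] [DecidableEq ι] {ρ : Matrix ι ι ℂ} (hρ : ρ.IsHermitian)
include hρ

theorem eigenvalues_eq_zero_or_eq_of_mul_self_eq_smul {c : ℝ} (h : ρ * ρ = (c : ℂ) • ρ)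
    (i : ι) : hρ.eigenvalues i = 0 ∨ hρ.eigenvalues i = c := by
  set v : ι → ℂ := ⇑(hρ.eigenvectorBasis i)
  set μ : ℂ := (hρ.eigenvalues i : ℂ)
  have hv : ρ *ᵥ v = μ • v := by
    rw [hρ.mulVec_eigenvectorBasis]
    exact RCLike.real_smul_eq_coe_smul _ _
  have hv0 : v ≠ 0 := fun h0 => hρ.eigenvectorBasis.orthonormal.ne_zero i (by simpa [v] using h0)
  have hμ : (μ * (μ - c)) • v = 0 := by
    have := congrArg (· *ᵥ v) h
    simp only [← mulVec_mulVec, smul_mulVec, hv, mulVec_smul, smul_smul] at this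
    rw [mul_sub, sub_smul, this, mul_comm, sub_self]
  rcases mul_eq_zero.1 ((smul_eq_zero.1 hμ).resolve_right hv0) with h0 | h0
  · exact Or.inl (Complex.ofReal_eq_zero.1 h0)
  · exact Or.inr (Complex.ofReal_inj.1 (sub_eq_zero.1 h0))

theorem sum_eigenvalues_apply_of_mul_self_eq_smul {c : ℝ} (h : ρ * ρ = (c : ℂ) • ρ)
    (f : ℝ → ℝ) (hf : f 0 = 0) :
    ∑ i, f (hρ.eigenvalues i) = Fintype.card {i // hρ.eigenvalues i ≠ 0} * f c := by
  rw [Fintype.card_subtype, ← Finset.sum_filter_of_ne (p := fun i => hρ.eigenvalues i ≠ 0)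
    fun i _ hi h0 => hi (by rw [h0, hf]),
    ← nsmul_eq_mul, ← Finset.sum_const]
  refine Finset.sum_congr rfl fun i hi => ?_
  rw [(hρ.eigenvalues_eq_zero_or_eq_of_mul_self_eq_smul h i).resolve_left
    (Finset.mem_filter.1 hi).2]

variable (htr : ρ.trace = 1) {K : ℕ} (h : ρ * ρ = (K : ℂ)⁻¹ • ρ)
include htr h

theorem card_eigenvalues_ne_zero_mul_inv :
    (Fintype.card {i // hρ.eigenvalues i ≠ 0} : ℝ) * (K : ℝ)⁻¹ = 1 := by
  have h' : ρ * ρ = (((K : ℝ)⁻¹ : ℝ) : ℂ) • ρ := by simpa using h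
  have hsum := hρ.sum_eigenvalues_apply_of_mul_self_eq_smul h' id rfl
  simp only [id] at hsum
  rw [← hsum]
  have := hρ.trace_eq_sum_eigenvalues.symm.trans htr
  rw [← RCLike.ofReal_sum] at this
  exact RCLike.ofReal_inj.1 (this.trans RCLike.ofReal_one.symm)

theorem pos_of_mul_self_eq_inv_smul : 0 < K :=
  Nat.pos_of_ne_zero fun hK => by simpa [hK] using hρ.card_eigenvalues_ne_zero_mul_inv htr h

theorem card_eigenvalues_ne_zero : Fintype.card {i // hρ.eigenvalues i ≠ 0} = K := by
  have hK : (K : ℝ) ≠ 0 := Nat.cast_ne_zero.2 (hρ.pos_of_mul_self_eq_inv_smul htr h).ne'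
  exact_mod_cast (mul_inv_eq_one₀ hK).1 (hρ.card_eigenvalues_ne_zero_mul_inv htr h)

theorem vnEntropy_eq_log : vnEntropy ρ = Real.log K := by
  have h' : ρ * ρ = (((K : ℝ)⁻¹ : ℝ) : ℂ) • ρ := by simpa using h
  rw [vnEntropy, dif_pos hρ,
    hρ.sum_eigenvalues_apply_of_mul_self_eq_smul h' (fun x => x * Real.log x) (by simp),
    ← mul_assoc, hρ.card_eigenvalues_ne_zero_mul_inv htr h, Real.log_inv]
  ring

theorem renyiEntropy_eq_log {q : ℝ} (hq : q ≠ 1) : renyiEntropy q ρ = Real.log K := by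
  have h' : ρ * ρ = (((K : ℝ)⁻¹ : ℝ) : ℂ) • ρ := by simpa using h
  have hK : (0 : ℝ) < K := Nat.cast_pos.2 (hρ.pos_of_mul_self_eq_inv_smul htr h)
  rw [renyiEntropy, dif_pos hρ,
    hρ.sum_eigenvalues_apply_of_mul_self_eq_smul h' (fun x => if x = 0 then 0 else x ^ q) (by simp),
    hρ.card_eigenvalues_ne_zero htr h, if_neg (inv_ne_zero hK.ne'),
    Real.log_mul hK.ne' (Real.rpow_pos_of_pos (inv_pos.2 hK) q).ne',
    Real.log_rpow (inv_pos.2 hK), Real.log_inv]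
  field_simp [sub_ne_zero.2 hq.symm]
  ring

theorem exists_projection_of_mul_self_eq_inv_smul :
    ∃ P : Matrix ι ι ℂ, P.IsHermitian ∧ P * P = P ∧ P.rank = K ∧ ρ = (K : ℂ)⁻¹ • P := by
  have hK : (K : ℂ) ≠ 0 := Nat.cast_ne_zero.2 (hρ.pos_of_mul_self_eq_inv_smul htr h).ne'
  refine ⟨(K : ℂ) • ρ, hρ.smul (IsSelfAdjoint.natCast K), ?_, ?_, (inv_smul_smul₀ hK ρ).symm⟩
  · rw [smul_mul_smul, h, smul_smul, mul_assoc, mul_inv_cancel₀ hK, mul_one]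
  · rw [rank_smul_of_mem_nonZeroDivisors _ (mem_nonZeroDivisors_of_ne_zero hK),
      hρ.rank_eq_card_non_zero_eigs, hρ.card_eigenvalues_ne_zero htr h]

end Matrix.IsHermitian

open Finset in
theorem exists_perm_fiberwise {α β : Type*} [Fintype α] [DecidableEq α] [DecidableEq β]
    (f : α → β) {A B : Finset α} (hAB : ∀ b, #(A.filter (f · = b)) = #(B.filter (f · = b))) :
    ∃ σ : Equiv.Perm α, ∀ x, f (σ x) = f x ∧ (σ x ∈ B ↔ x ∈ A) := by
  have hcard (C : Finset α) (b : β) (t : Bool) :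
      Fintype.card {x // (f x, decide (x ∈ C)) = (b, t)} =
        if t then #(C.filter (f · = b)) else #(univ.filter (f · = b)) - #(C.filter (f · = b)) := by
    have hsplit := card_filter_add_card_filter_not (s := univ.filter (f · = b)) (· ∈ C)
    rw [filter_filter, filter_filter, filter_congr_decidable] at hsplit
    have hin : #{x | f x = b ∧ x ∈ C} = #(C.filter (f · = b)) := by
      congr 1; ext; simp [and_comm]
    rw [Fintype.card_subtype]
    cases t <;> simp only [Prod.mk.injEq, decide_eq_true_iff, decide_eq_false_iff_not] <;>
      simp <;> omega
  let e (c : β × Bool) : {x // (f x, decide (x ∈ A)) = c} ≃ {x // (f x, decide (x ∈ B)) = c} :=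
    Fintype.equivOfCardEq (by rw [hcard, hcard, hAB])
  refine ⟨Equiv.ofFiberEquiv e, fun x => ?_⟩
  simpa using Prod.ext_iff.1 (Equiv.ofFiberEquiv_map e x)

theorem Equiv.Perm.of_eq_apply_mem_unitaryGroup {κ : Type*} [Fintype κ] [DecidableEq κ]
    (σ : Equiv.Perm κ) :
    (Matrix.of fun i j => if i = σ j then (1 : ℂ) else 0) ∈ Matrix.unitaryGroup κ ℂ := by
  have hσ : (Matrix.of fun i j => if i = σ j then (1 : ℂ) else 0) = σ⁻¹.permMatrix ℂ := by
    ext i j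
    simp [PEquiv.toMatrix_apply, Equiv.Perm.inv_def, Equiv.symm_apply_eq]
  rw [hσ, Matrix.mem_unitaryGroup_iff, Matrix.star_eq_conjTranspose,
    Matrix.conjTranspose_permMatrix, ← Matrix.permMatrix_mul, inv_mul_cancel,
    Matrix.permMatrix_one]

namespace Multigraph

variable (G : Multigraph)

theorem exists_compatible_cr_eq_area {s : G.V → ℕ} (hs : ∃ M, G.Compatible s M) :
    ∃ M, G.Compatible s M ∧ G.cr M = G.area s := by
  obtain ⟨M₀, hM₀⟩ := hs
  refine Nat.sSup_mem (s := {k | ∃ M, G.Compatible s M ∧ G.cr M = k}) ⟨_, M₀, hM₀, rfl⟩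
    ⟨Fintype.card G.E, ?_⟩
  rintro _ ⟨M, -, rfl⟩
  exact Finset.card_filter_le _ _

theorem prod_ite_iff_eq_pow_cr {R : Type*} [CommMonoid R] (M : Finset G.Half) (c : R) :
    ∏ e, (if ((e, false) ∈ M ↔ (e, true) ∈ M) then 1 else c) = c ^ G.cr M := by
  rw [Finset.prod_ite, Finset.prod_const_one, one_mul, Finset.prod_const, cr]
  congr 2
  ext e
  simp only [Finset.mem_filter, Finset.mem_univ, true_and]
  tauto

section PermutationUnitaries

variable (N : ℕ) (p : Equiv.Perm G.Half) (hp : ∀ h, G.vertexOf (p h) = G.vertexOf h)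

def vertexPerm (v : G.V) : Equiv.Perm (G.VIdx (fun _ => N) v) :=
  (p.subtypePerm fun h => by rw [hp]).arrowCongr (Equiv.refl _)

noncomputable def permUnitaries (v : G.V) :
    Matrix (G.VIdx (fun _ => N) v) (G.VIdx (fun _ => N) v) ℂ :=
  Matrix.of fun i j => if i = G.vertexPerm N p hp v j then 1 else 0

theorem prod_permUnitaries_apply (x y : G.HIdx (fun _ => N)) :
    ∏ v, G.permUnitaries N p hp v (fun h => x h.1) (fun h => y h.1) =
      if y = x ∘ p then 1 else 0 := by
  simp only [permUnitaries, Matrix.of_apply]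
  rw [Finset.prod_boole]
  congr 1
  refine propext ⟨fun H => funext fun h => ?_, fun H v _ => funext fun h => ?_⟩
  · have : x (p h) = y (p.symm (p h)) := congrFun (H _ (Finset.mem_univ _)) ⟨p h, rfl⟩
    rw [Function.comp_apply, this, Equiv.symm_apply_apply]
  · subst H
    exact congrArg x (p.apply_symm_apply h.1).symm

theorem gvec_permUnitaries (x : G.HIdx (fun _ => N)) :
    G.gvec (fun _ => N) (G.permUnitaries N p hp) x = ∏ e, bellState N fun b => x (p (e, b)) := by
  simp only [gvec, prod_permUnitaries_apply, boole_mul, Finset.sum_ite_eq', Finset.mem_univ,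
    if_true]
  rfl

end PermutationUnitaries

section GraphStateMarginal

variable (N : ℕ) {S M : Finset G.Half} {p : Equiv.Perm G.Half}
  (hp : ∀ h, G.vertexOf (p h) = G.vertexOf h) (hpS : ∀ h, p h ∈ S ↔ h ∈ M)
include hpS

theorem exists_gmarg_permUnitaries_eq_submatrix :
    ∃ e : ({h // h ∈ S} → Fin N) ≃ ((i : G.E) → {b // (i, b) ∈ M} → Fin N),
      G.gmarg (fun _ => N) S (G.permUnitaries N p hp) =
        (Matrix.piKronecker fun i => reducedDensity (fun b => (i, b) ∈ M) (bellState N)).submatrix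
          e e := by
  have hSM : ∀ h, h ∈ S ↔ p.symm h ∈ M := fun h => by rw [← hpS, p.apply_symm_apply]
  refine ⟨((p.symm.subtypeEquiv hSM).arrowCongr (.refl _)).trans
    (Equiv.piSubtypeProdCurry fun h => h ∈ M), ?_⟩
  have hψ : G.gvec (fun _ => N) (G.permUnitaries N p hp) =
      fun x => ∏ i, bellState N fun b => (x ∘ p.symm.symm) (i, b) :=
    funext (G.gvec_permUnitaries N p hp)
  change reducedDensity (· ∈ S) _ = _
  rw [hψ, reducedDensity_comp_equiv _ p.symm hSM fun x => ∏ i, bellState N fun b => x (i, b),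
    reducedDensity_prod]
  rfl

variable {N} (hN : N ≠ 0)
include hN

theorem trace_gmarg_permUnitaries :
    (G.gmarg (fun _ => N) S (G.permUnitaries N p hp)).trace = 1 := by
  obtain ⟨e, he⟩ := G.exists_gmarg_permUnitaries_eq_submatrix N hp hpS
  rw [he, Matrix.trace_submatrix_equiv, Matrix.trace_piKronecker]
  exact Finset.prod_eq_one fun i _ => trace_reducedDensity_bellState hN _

theorem gmarg_permUnitaries_mul_self :
    G.gmarg (fun _ => N) S (G.permUnitaries N p hp) *
        G.gmarg (fun _ => N) S (G.permUnitaries N p hp) =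
      ((N : ℂ) ^ G.cr M)⁻¹ • G.gmarg (fun _ => N) S (G.permUnitaries N p hp) := by
  obtain ⟨e, he⟩ := G.exists_gmarg_permUnitaries_eq_submatrix N hp hpS
  simp only [he, Matrix.submatrix_mul_equiv, Matrix.piKronecker_mul,
    reducedDensity_bellState_mul_self hN, Matrix.piKronecker_smul, Matrix.submatrix_smul,
    prod_ite_iff_eq_pow_cr, inv_pow]
  rfl

end GraphStateMarginal

end Multigraph

/-- With every half-edge carrying `ℂ^N`, there are permutation
matrices `U_v` at the vertices such that the graph state marginal is
`ρ_S = N^{-X} P` for an orthogonal projection `P` of rank `N^X`, where `X = |∂S|`;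
consequently `H(ρ_S) = X ln N` and every Rényi entropy
`H_q(ρ_S) = (1-q)⁻¹ ln Tr(ρ_S^q)` (for `q ≥ 0`, `q ≠ 1`) also equals `X ln N`. -/
theorem permutation_unitaries_projection (G : Multigraph) (S : Finset G.Half)
    (N : ℕ) (hN : 1 ≤ N) :
    ∃ U : ∀ v : G.V, Matrix (G.VIdx (fun _ => N) v) (G.VIdx (fun _ => N) v) ℂ,
      (∀ v : G.V, ∃ σ : Equiv.Perm (G.VIdx (fun _ => N) v),
        U v = Matrix.of fun i j => if i = σ j then 1 else 0) ∧
      (∀ v : G.V, U v ∈ Matrix.unitaryGroup (G.VIdx (fun _ => N) v) ℂ) ∧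
      ∃ P : Matrix ((h : {h : G.Half // h ∈ S}) → Fin N)
          ((h : {h : G.Half // h ∈ S}) → Fin N) ℂ,
        P.IsHermitian ∧ P * P = P ∧ P.rank = N ^ G.area (G.countOf S) ∧
        G.gmarg (fun _ => N) S U = (((N : ℂ)) ^ G.area (G.countOf S))⁻¹ • P ∧
        vnEntropy (G.gmarg (fun _ => N) S U) =
          (G.area (G.countOf S) : ℝ) * Real.log N ∧
        ∀ q : ℝ, 0 ≤ q → q ≠ 1 →
          renyiEntropy q (G.gmarg (fun _ => N) S U) =
            (G.area (G.countOf S) : ℝ) * Real.log N := by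
  obtain ⟨M, hM, hcr⟩ := G.exists_compatible_cr_eq_area (s := G.countOf S) ⟨S, fun _ => rfl⟩
  obtain ⟨p, hp⟩ := exists_perm_fiberwise G.vertexOf hM
  have hN₀ : N ≠ 0 := by omega
  set U := G.permUnitaries N p fun h => (hp h).1
  have hρ : (G.gmarg (fun _ => N) S U).IsHermitian := isHermitian_reducedDensity _ _
  have htr := G.trace_gmarg_permUnitaries (fun h => (hp h).1) (fun h => (hp h).2) hN₀
  have hsq : G.gmarg (fun _ => N) S U * G.gmarg (fun _ => N) S U =
      ((N ^ G.area (G.countOf S) : ℕ) : ℂ)⁻¹ • G.gmarg (fun _ => N) S U := by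
    rw [G.gmarg_permUnitaries_mul_self (fun h => (hp h).1) (fun h => (hp h).2) hN₀, hcr,
      Nat.cast_pow]
  obtain ⟨P, hPh, hPP, hPr, hρP⟩ := hρ.exists_projection_of_mul_self_eq_inv_smul htr hsq
  refine ⟨U, fun v => ⟨_, rfl⟩, fun v => Equiv.Perm.of_eq_apply_mem_unitaryGroup _,
    P, hPh, hPP, hPr, by rwa [← Nat.cast_pow], ?_, fun q _ hq => ?_⟩
  · rw [hρ.vnEntropy_eq_log htr hsq, Nat.cast_pow, Real.log_pow]
  · rw [hρ.renyiEntropy_eq_log htr hsq hq, Nat.cast_pow, Real.log_pow]
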